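/- arXiv:1712.01206 — 2 statements merged into one kernel-verified Lean document; each statement's English description precedes it below -/
import Mathlib

section
/- Let n ≥ 0, let Q ⊆ [0,1)² be a dyadic rectangle with |Q| ≥ 2^{-n-1}, and let ε_R ∈ {-1,1} be arbitrary signs for the dyadic rectangles R of area 2^{-n}. Then for every integer 0 ≤ k ≤ n+1, the Lebesgue measure of {p ∈ Q : ∑_{|R| = 2^{-n}} ε_R h_R(p) = n+1-2k} equals |Q|·2^{-(n+1)}·C(n+1,k). -/
/-!
Cut `Q` into the dyadic squares of side `2^{-(n+1)}`. On the square with corner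
`(X, Y) · 2^{-(n+1)}` exactly one rectangle of each layer is active, and its Haar function is the
sign of one binary digit of `X` times the sign of one binary digit of `Y`; so the sum is constant
there, equal to `cellValue (n+1) ε X Y`. The last binary digit of `X` enters only through the
rectangles of width `2^{-n}`, the last one of `Y` only through those of height `2^{-n}`, each
time as a factor `±1` of a single term. Splitting a block of squares according to that digit
therefore shows that the number of squares on which the sum equals `s` obeys Pascal's rule
`c_{N+1}(s) = c_N(s - 1) + c_N(s + 1)`, i.e. it is a multiple of the number of `±1` sequences of
length `n + 1` summing to `s`, which is `C(n+1, k)` for `s = n + 1 - 2k`.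
-/

open MeasureTheory Finset

noncomputable section

/-- The dyadic interval `[m·2^{-k}, (m+1)·2^{-k})`. -/
def dyadicI (k m : ℕ) : Set ℝ :=
  Set.Ico ((m : ℝ) * (2:ℝ)^(-(k:ℤ))) (((m : ℝ) + 1) * (2:ℝ)^(-(k:ℤ)))

/-- The Haar function of the dyadic interval `[m·2^{-k}, (m+1)·2^{-k})`:
`-1` on the left half, `+1` on the right half, `0` outside. -/
def haarI (k m : ℕ) (x : ℝ) : ℝ :=
  if x ∈ Set.Ico ((m : ℝ) * (2:ℝ)^(-(k:ℤ))) (((m : ℝ) + 1/2) * (2:ℝ)^(-(k:ℤ))) then -1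
  else if x ∈ Set.Ico (((m : ℝ) + 1/2) * (2:ℝ)^(-(k:ℤ))) (((m : ℝ) + 1) * (2:ℝ)^(-(k:ℤ))) then 1
  else 0

/-- The Haar function of the dyadic rectangle `[m·2^{-k},(m+1)·2^{-k}) × [m'·2^{-j},(m'+1)·2^{-j})`. -/
def haarR (k m j m' : ℕ) (p : ℝ × ℝ) : ℝ := haarI k m p.1 * haarI j m' p.2

/-- The signed small ball sum `∑_{|R| = 2^{-n}} ε_R h_R`, where the rectangle of the layer `k`
with horizontal index `m` and vertical index `m'` carries the sign `ε k m m'`. -/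
def signedSum (n : ℕ) (ε : ℕ → ℕ → ℕ → ℝ) (p : ℝ × ℝ) : ℝ :=
  ∑ k ∈ Finset.range (n+1), ∑ m ∈ Finset.range (2^k), ∑ m' ∈ Finset.range (2^(n-k)),
    ε k m m' * haarR k m (n-k) m' p

/-- `rad j t = 1` if the `j`-th binary digit `⌊2^j t⌋ mod 2` of `t` is `1`, `-1` otherwise. -/
def rad (j : ℕ) (t : ℝ) : ℝ := if ⌊(2:ℝ)^j * t⌋ % 2 = 1 then 1 else -1

lemma mem_dyadicI_iff {k m : ℕ} {x : ℝ} : x ∈ dyadicI k m ↔ 0 ≤ x ∧ ⌊(2:ℝ)^k * x⌋₊ = m := by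
  have h2 : (0:ℝ) < 2^k := by positivity
  rw [dyadicI, Set.mem_Ico, zpow_neg, zpow_natCast, ← div_eq_mul_inv, ← div_eq_mul_inv,
    div_le_iff₀ h2, lt_div_iff₀ h2]
  constructor
  · rintro ⟨hlo, hhi⟩
    have hx : 0 ≤ x := by nlinarith [(m.cast_nonneg : (0:ℝ) ≤ m)]
    exact ⟨hx, (Nat.floor_eq_iff (by positivity)).2 ⟨by linarith, by linarith⟩⟩
  · rintro ⟨hx, hm⟩
    have := (Nat.floor_eq_iff (by positivity : (0:ℝ) ≤ 2^k * x)).1 hm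
    constructor <;> linarith

lemma eq_of_mem_dyadicI {k m m' : ℕ} {x : ℝ} (h : x ∈ dyadicI k m) (h' : x ∈ dyadicI k m') :
    m = m' :=
  (mem_dyadicI_iff.1 h).2.symm.trans (mem_dyadicI_iff.1 h').2

lemma mem_dyadicI_div {k K X : ℕ} {x : ℝ} (hkK : k ≤ K) (hx : x ∈ dyadicI K X) :
    x ∈ dyadicI k (X / 2^(K-k)) := by
  obtain ⟨hx0, rfl⟩ := mem_dyadicI_iff.1 hx
  refine mem_dyadicI_iff.2 ⟨hx0, ?_⟩
  rw [← Nat.floor_div_natCast, Nat.cast_pow, Nat.cast_ofNat, ← pow_sub_mul_pow 2 hkK]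
  field_simp

lemma mem_dyadicI_iff_exists {a K q : ℕ} {x : ℝ} (haK : a ≤ K) :
    x ∈ dyadicI a q ↔ ∃ u < 2^(K-a), x ∈ dyadicI K (q * 2^(K-a) + u) := by
  constructor
  · intro hx
    set X := ⌊(2:ℝ)^K * x⌋₊
    have hX : x ∈ dyadicI K X := mem_dyadicI_iff.2 ⟨(mem_dyadicI_iff.1 hx).1, rfl⟩
    have hq : X / 2^(K-a) = q := eq_of_mem_dyadicI (mem_dyadicI_div haK hX) hx
    refine ⟨X % 2^(K-a), Nat.mod_lt _ (by positivity), ?_⟩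
    rwa [← hq, Nat.div_add_mod']
  · rintro ⟨u, hu, hxu⟩
    have hq : (q * 2^(K-a) + u) / 2^(K-a) = q := by
      rw [mul_comm, Nat.mul_add_div (by positivity), Nat.div_eq_of_lt hu, add_zero]
    simpa only [hq] using mem_dyadicI_div haK hxu

lemma two_zpow_neg_succ (k : ℕ) : (2:ℝ)^(-((k+1 : ℕ) : ℤ)) = 2^(-(k:ℤ)) / 2 := by
  rw [Nat.cast_succ, neg_add, zpow_add₀ two_ne_zero, zpow_neg_one, div_eq_mul_inv]

lemma dyadicI_succ_two_mul (k m : ℕ) :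
    dyadicI (k+1) (2*m) = Set.Ico (m * (2:ℝ)^(-(k:ℤ))) ((m + 1/2) * (2:ℝ)^(-(k:ℤ))) := by
  rw [dyadicI, two_zpow_neg_succ]
  push_cast
  ring_nf

lemma dyadicI_succ_two_mul_add_one (k m : ℕ) :
    dyadicI (k+1) (2*m+1) = Set.Ico ((m + 1/2) * (2:ℝ)^(-(k:ℤ))) ((m + 1) * (2:ℝ)^(-(k:ℤ))) := by
  rw [dyadicI, two_zpow_neg_succ]
  push_cast
  ring_nf

def bitSign (d : ℕ) : ℝ := if d % 2 = 1 then 1 else -1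

lemma haarI_of_mem_dyadicI_succ {k D : ℕ} {x : ℝ} (hx : x ∈ dyadicI (k+1) D) (m : ℕ) :
    haarI k m x = if m = D / 2 then bitSign D else 0 := by
  have hmem : ∀ m', x ∈ dyadicI (k+1) m' ↔ D = m' :=
    fun m' => ⟨eq_of_mem_dyadicI hx, fun h => h ▸ hx⟩
  simp only [haarI, ← dyadicI_succ_two_mul, ← dyadicI_succ_two_mul_add_one, hmem, bitSign]
  split_ifs <;> first | rfl | omega

lemma haarI_of_mem_dyadicI {k K X : ℕ} {x : ℝ} (hk : k < K) (hx : x ∈ dyadicI K X) (m : ℕ) :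
    haarI k m x = if m = X / 2^(K-k) then bitSign (X / 2^(K-1-k)) else 0 := by
  have hx' : x ∈ dyadicI (k+1) (X / 2^(K-1-k)) := by
    simpa only [show K - (k+1) = K-1-k by omega] using mem_dyadicI_div hk hx
  rw [haarI_of_mem_dyadicI_succ hx', Nat.div_div_eq_div_mul, ← pow_succ,
    show K-1-k+1 = K-k by omega]

lemma div_two_pow_sub_lt {X K j : ℕ} (hX : X < 2^K) (hj : j ≤ K) : X / 2^(K-j) < 2^j := by
  rw [Nat.div_lt_iff_lt_mul (by positivity), ← pow_add, Nat.add_sub_cancel' hj]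
  exact hX

def cellValue (N : ℕ) (ε : ℕ → ℕ → ℕ → ℝ) (X Y : ℕ) : ℝ :=
  ∑ k ∈ range N, ε k (X / 2^(N-k)) (Y / 2^(k+1)) * bitSign (X / 2^(N-1-k)) * bitSign (Y / 2^k)

lemma signedSum_eq_cellValue {n X Y : ℕ} {x y : ℝ} (ε : ℕ → ℕ → ℕ → ℝ)
    (hX : X < 2^(n+1)) (hY : Y < 2^(n+1)) (hx : x ∈ dyadicI (n+1) X) (hy : y ∈ dyadicI (n+1) Y) :
    signedSum n ε (x, y) = cellValue (n+1) ε X Y := by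
  refine sum_congr rfl fun k hk => ?_
  have hkn : k < n + 1 := mem_range.1 hk
  have hyk := haarI_of_mem_dyadicI (by omega : n - k < n + 1) hy
  rw [show n+1-(n-k) = k+1 by omega, show n+1-1-(n-k) = k by omega] at hyk
  have hXk := div_two_pow_sub_lt hX hkn.le
  have hYk : Y / 2^(k+1) < 2^(n-k) := by
    simpa only [show n+1-(n-k) = k+1 by omega] using div_two_pow_sub_lt hY (by omega : n-k ≤ n+1)
  simp only [haarR, haarI_of_mem_dyadicI hkn hx, hyk, mul_ite, ite_mul, mul_zero, zero_mul,
    sum_ite_eq', mem_range, hXk, hYk, if_true]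
  ring

lemma bitSign_two_mul_add (X r : ℕ) : bitSign (2 * X + r) = bitSign (r % 2) := by
  rw [bitSign, bitSign, Nat.mod_mod, Nat.mul_add_mod]

lemma two_mul_add_div_two_pow_succ {r : ℕ} (hr : r < 2) (X j : ℕ) :
    (2 * X + r) / 2^(j+1) = X / 2^j := by
  rw [pow_succ', ← Nat.div_div_eq_div_mul, show (2 * X + r) / 2 = X by omega]

lemma cellValue_two_mul_add_left {r : ℕ} (hr : r < 2) (N : ℕ) (ε : ℕ → ℕ → ℕ → ℝ) (X Y : ℕ) :
    cellValue (N+1) ε (2 * X + r) Y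
      = cellValue N ε X Y + ε N X (Y / 2^(N+1)) * bitSign (Y / 2^N) * bitSign r := by
  rw [cellValue, cellValue, sum_range_succ]
  congr 1
  · refine sum_congr rfl fun k hk => ?_
    have hkN : k < N := mem_range.1 hk
    rw [show N + 1 - k = (N - k) + 1 by omega, show N + 1 - 1 - k = (N - 1 - k) + 1 by omega,
      two_mul_add_div_two_pow_succ hr, two_mul_add_div_two_pow_succ hr]
  · rw [show N + 1 - N = 0 + 1 by omega, show N + 1 - 1 - N = 0 by omega,
      two_mul_add_div_two_pow_succ hr, pow_zero, Nat.div_one, Nat.div_one, bitSign_two_mul_add,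
      Nat.mod_eq_of_lt hr]
    ring

lemma cellValue_two_mul_add_right {r : ℕ} (hr : r < 2) (N : ℕ) (ε : ℕ → ℕ → ℕ → ℝ) (X Y : ℕ) :
    cellValue (N+1) ε X (2 * Y + r)
      = cellValue N (fun k => ε (k+1)) X Y
        + ε 0 (X / 2^(N+1)) Y * bitSign (X / 2^N) * bitSign r := by
  rw [cellValue, cellValue, sum_range_succ']
  congr 1
  · refine sum_congr rfl fun k hk => ?_
    rw [show N + 1 - (k + 1) = N - k by omega, show N + 1 - 1 - (k + 1) = N - 1 - k by omega,
      two_mul_add_div_two_pow_succ hr, two_mul_add_div_two_pow_succ hr]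
  · simp only [Nat.add_sub_cancel, Nat.sub_zero, zero_add, two_mul_add_div_two_pow_succ hr,
      pow_zero, Nat.div_one, bitSign_two_mul_add, Nat.mod_eq_of_lt hr]

/-- The number of sign vectors `σ ∈ {-1, 1}^N` with `∑ σᵢ = s`. -/
def signSumCount : ℕ → ℝ → ℕ
  | 0, s => if s = 0 then 1 else 0
  | N + 1, s => signSumCount N (s - 1) + signSumCount N (s + 1)

lemma signSumCount_eq_zero_of_lt {N : ℕ} {s : ℝ} (h : (N : ℝ) < s) : signSumCount N s = 0 := by
  induction N generalizing s with
  | zero =>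
    rw [Nat.cast_zero] at h
    simp [signSumCount, h.ne']
  | succ N ih =>
    push_cast at h
    rw [signSumCount, ih (by linarith), ih (by linarith)]

lemma signSumCount_sub_two_mul (N k : ℕ) : signSumCount N (N - 2 * k) = N.choose k := by
  induction N generalizing k with
  | zero => cases k <;> simp [signSumCount, Nat.cast_add_one_ne_zero]
  | succ N ih =>
    cases k with
    | zero =>
      rw [signSumCount,
        show ((N + 1 : ℕ) : ℝ) - 2 * (0 : ℕ) - 1 = N - 2 * (0 : ℕ) by push_cast; ring,
        ih, signSumCount_eq_zero_of_lt (by push_cast; linarith)]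
      simp
    | succ k =>
      rw [signSumCount,
        show ((N + 1 : ℕ) : ℝ) - 2 * (k + 1 : ℕ) - 1 = N - 2 * (k + 1 : ℕ) by push_cast; ring,
        show ((N + 1 : ℕ) : ℝ) - 2 * (k + 1 : ℕ) + 1 = N - 2 * k by push_cast; ring,
        ih, ih, Nat.choose_succ_succ, add_comm]

lemma sum_range_two_mul {M : Type*} [AddCommMonoid M] (m : ℕ) (f : ℕ → M) :
    ∑ i ∈ range (2 * m), f i = ∑ i ∈ range m, (f (2 * i) + f (2 * i + 1)) := by
  induction m with
  | zero => simp
  | succ m ih =>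
    rw [show 2 * (m + 1) = 2 * m + 1 + 1 by ring, sum_range_succ, sum_range_succ, ih,
      sum_range_succ, add_assoc]

lemma ite_add_ite_add_sign {σ : ℝ} (hσ : σ = 1 ∨ σ = -1) (g s : ℝ) :
    ((if g + σ * bitSign 0 = s then 1 else 0) + (if g + σ * bitSign 1 = s then 1 else 0) : ℕ)
      = (if g = s - 1 then 1 else 0) + (if g = s + 1 then 1 else 0) := by
  have h0 : bitSign 0 = -1 := by norm_num [bitSign]
  have h1 : bitSign 1 = 1 := by norm_num [bitSign]
  have key : ∀ c : ℝ, (g + c = s) = (g = s - c) := fun c => propext eq_sub_iff_add_eq.symm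
  rcases hσ with rfl | rfl <;> simp only [h0, h1, key] <;> norm_num [add_comm]

lemma mul_bitSign_eq_one_or {σ : ℝ} (hσ : σ = 1 ∨ σ = -1) (d : ℕ) :
    σ * bitSign d = 1 ∨ σ * bitSign d = -1 := by
  unfold bitSign
  rcases hσ with rfl | rfl <;> split_ifs <;> norm_num

def blockCount (N : ℕ) (ε : ℕ → ℕ → ℕ → ℝ) (A C P Q : ℕ) (s : ℝ) : ℕ :=
  ∑ u ∈ range (2^A), ∑ v ∈ range (2^C),
    if cellValue N ε (P * 2^A + u) (Q * 2^C + v) = s then 1 else 0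

lemma blockCount_zero (ε : ℕ → ℕ → ℕ → ℝ) (A C P Q : ℕ) (s : ℝ) :
    blockCount 0 ε A C P Q s = 2^(A+C) * signSumCount 0 s := by
  simp [blockCount, cellValue, signSumCount, pow_add, eq_comm]

section blockCount

variable {ε : ℕ → ℕ → ℕ → ℝ} (hε : ∀ j m m', ε j m m' = 1 ∨ ε j m m' = -1)
include hε

lemma blockCount_succ_left (N A C P Q : ℕ) (s : ℝ) :
    blockCount (N+1) ε (A+1) C P Q s
      = blockCount N ε A C P Q (s - 1) + blockCount N ε A C P Q (s + 1) := by
  simp only [blockCount, ← sum_add_distrib]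
  rw [pow_succ', sum_range_two_mul]
  refine sum_congr rfl fun u _ => ?_
  rw [← sum_add_distrib]
  refine sum_congr rfl fun v _ => ?_
  rw [show P * (2 * 2^A) + 2 * u = 2 * (P * 2^A + u) + 0 by ring,
    show P * (2 * 2^A) + (2 * u + 1) = 2 * (P * 2^A + u) + 1 by ring,
    cellValue_two_mul_add_left (by norm_num), cellValue_two_mul_add_left (by norm_num)]
  exact ite_add_ite_add_sign (mul_bitSign_eq_one_or (hε ..) _) _ s

lemma blockCount_succ_right (N A C P Q : ℕ) (s : ℝ) :
    blockCount (N+1) ε A (C+1) P Q s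
      = blockCount N (fun k => ε (k+1)) A C P Q (s - 1)
        + blockCount N (fun k => ε (k+1)) A C P Q (s + 1) := by
  simp only [blockCount, ← sum_add_distrib]
  refine sum_congr rfl fun u _ => ?_
  rw [pow_succ', sum_range_two_mul]
  refine sum_congr rfl fun v _ => ?_
  rw [show Q * (2 * 2^C) + 2 * v = 2 * (Q * 2^C + v) + 0 by ring,
    show Q * (2 * 2^C) + (2 * v + 1) = 2 * (Q * 2^C + v) + 1 by ring,
    cellValue_two_mul_add_right (by norm_num), cellValue_two_mul_add_right (by norm_num)]
  exact ite_add_ite_add_sign (mul_bitSign_eq_one_or (hε ..) _) _ s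

lemma blockCount_eq {N A C : ℕ} (h : N ≤ A + C) (P Q : ℕ) (s : ℝ) :
    blockCount N ε A C P Q s = 2^(A+C-N) * signSumCount N s := by
  induction N generalizing ε A C s with
  | zero => exact blockCount_zero ε A C P Q s
  | succ N ih =>
    rcases A with _ | A
    · rcases C with _ | C
      · omega
      rw [blockCount_succ_right hε, ih (fun j => hε (j+1)) (by omega),
        ih (fun j => hε (j+1)) (by omega), signSumCount, mul_add,
        show 0 + (C + 1) - (N + 1) = 0 + C - N by omega]
    · rw [blockCount_succ_left hε, ih hε (by omega), ih hε (by omega), signSumCount, mul_add,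
        show A + 1 + C - (N + 1) = A + C - N by omega]

end blockCount

lemma disjoint_dyadicI {k m m' : ℕ} (h : m ≠ m') : Disjoint (dyadicI k m) (dyadicI k m') :=
  Set.disjoint_left.2 fun _ hx hx' => h (eq_of_mem_dyadicI hx hx')

lemma dyadicI_prod_eq_biUnion {a b K q₁ q₂ : ℕ} (ha : a ≤ K) (hb : b ≤ K) :
    dyadicI a q₁ ×ˢ dyadicI b q₂ = ⋃ uv ∈ range (2^(K-a)) ×ˢ range (2^(K-b)),
      dyadicI K (q₁ * 2^(K-a) + uv.1) ×ˢ dyadicI K (q₂ * 2^(K-b) + uv.2) := by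
  ext ⟨x, y⟩
  simp only [Set.mem_prod, mem_dyadicI_iff_exists ha, mem_dyadicI_iff_exists hb, Set.mem_iUnion,
    mem_product, mem_range, exists_prop, Prod.exists]
  constructor
  · rintro ⟨⟨u, hu, hxu⟩, ⟨v, hv, hyv⟩⟩
    exact ⟨u, v, ⟨hu, hv⟩, hxu, hyv⟩
  · rintro ⟨u, v, ⟨hu, hv⟩, hxu, hyv⟩
    exact ⟨⟨u, hu, hxu⟩, ⟨v, hv, hyv⟩⟩

lemma volume_dyadicI_prod (K X Y : ℕ) :
    volume (dyadicI K X ×ˢ dyadicI K Y) = ENNReal.ofReal ((2:ℝ)^(-(K:ℤ)) * 2^(-(K:ℤ))) := by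
  have hlen : ∀ m : ℕ, ((m:ℝ) + 1) * 2^(-(K:ℤ)) - m * 2^(-(K:ℤ)) = 2^(-(K:ℤ)) := fun m => by ring
  rw [dyadicI, dyadicI, Measure.volume_eq_prod, Measure.prod_prod, Real.volume_Ico, Real.volume_Ico,
    hlen, hlen, ← ENNReal.ofReal_mul (by positivity)]

lemma dyadicI_prod_inter_signedSum_eq {n X Y : ℕ} (ε : ℕ → ℕ → ℕ → ℝ) (hX : X < 2^(n+1))
    (hY : Y < 2^(n+1)) (s : ℝ) :
    dyadicI (n+1) X ×ˢ dyadicI (n+1) Y ∩ {p | signedSum n ε p = s}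
      = if cellValue (n+1) ε X Y = s then dyadicI (n+1) X ×ˢ dyadicI (n+1) Y else ∅ := by
  split_ifs with h
  · refine Set.inter_eq_left.2 fun p hp => ?_
    rw [Set.mem_ofPred_eq, ← h, ← signedSum_eq_cellValue ε hX hY hp.1 hp.2]
  · refine Set.eq_empty_of_forall_notMem fun p hp => h ?_
    rw [← signedSum_eq_cellValue ε hX hY hp.1.1 hp.1.2]
    exact hp.2

lemma mul_two_pow_sub_add_lt {c K q u : ℕ} (hq : q < 2^c) (hc : c ≤ K) (hu : u < 2^(K-c)) :
    q * 2^(K-c) + u < 2^K := calc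
  q * 2^(K-c) + u < (q + 1) * 2^(K-c) := by linarith
  _ ≤ 2^c * 2^(K-c) := Nat.mul_le_mul_right _ hq
  _ = 2^K := by rw [← pow_add, Nat.add_sub_cancel' hc]

lemma volume_signedSum_level_set {n a b q₁ q₂ : ℕ} (ha : a ≤ n + 1) (hb : b ≤ n + 1)
    (hq₁ : q₁ < 2^a) (hq₂ : q₂ < 2^b) (ε : ℕ → ℕ → ℕ → ℝ) (s : ℝ) :
    volume {p : ℝ × ℝ | p ∈ dyadicI a q₁ ×ˢ dyadicI b q₂ ∧ signedSum n ε p = s}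
      = blockCount (n+1) ε (n+1-a) (n+1-b) q₁ q₂ s
        * ENNReal.ofReal ((2:ℝ)^(-((n+1 : ℕ) : ℤ)) * 2^(-((n+1 : ℕ) : ℤ))) := by
  change volume (dyadicI a q₁ ×ˢ dyadicI b q₂ ∩ {p | signedSum n ε p = s}) = _
  rw [dyadicI_prod_eq_biUnion ha hb, Set.iUnion₂_inter,
    Set.iUnion₂_congr fun uv huv => dyadicI_prod_inter_signedSum_eq ε
    (mul_two_pow_sub_add_lt hq₁ ha (mem_range.1 (mem_product.1 huv).1))
    (mul_two_pow_sub_add_lt hq₂ hb (mem_range.1 (mem_product.1 huv).2)) s,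
    measure_biUnion_finset]
  · simp only [apply_ite volume, measure_empty, volume_dyadicI_prod, blockCount, sum_product,
      Nat.cast_sum, sum_mul, Nat.cast_ite, Nat.cast_one, Nat.cast_zero, ite_mul, one_mul, zero_mul]
  · refine Set.PairwiseDisjoint.mono (f := fun uv => dyadicI (n+1) (q₁ * 2^(n+1-a) + uv.1)
        ×ˢ dyadicI (n+1) (q₂ * 2^(n+1-b) + uv.2)) (fun uv _ uv' _ hne => Set.disjoint_prod.2 ?_)
      fun uv => by dsimp only; split_ifs <;> simp
    by_cases h : uv.1 = uv'.1
    · exact Or.inr (disjoint_dyadicI fun h' => hne (Prod.ext h (by omega)))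
    · exact Or.inl (disjoint_dyadicI (by omega))
  · intro uv _
    split_ifs
    · exact measurableSet_Ico.prod measurableSet_Ico
    · exact MeasurableSet.empty

theorem main_level_sets_general (n a b q1 q2 k : ℕ) (hab : a + b ≤ n + 1)
    (hq1 : q1 < 2^a) (hq2 : q2 < 2^b)
    (ε : ℕ → ℕ → ℕ → ℝ) (hε : ∀ j m m', ε j m m' = 1 ∨ ε j m m' = -1) :
    volume {p : ℝ × ℝ | p ∈ (dyadicI a q1) ×ˢ (dyadicI b q2) ∧
        signedSum n ε p = (n : ℝ) + 1 - 2 * k}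
      = ENNReal.ofReal ((2:ℝ)^(-(a:ℤ)-(b:ℤ)) * ((n+1).choose k : ℝ) / 2^(n+1)) := by
  rw [volume_signedSum_level_set (by omega) (by omega) hq1 hq2, blockCount_eq hε (by omega),
    show (n : ℝ) + 1 - 2 * k = ((n + 1 : ℕ) : ℝ) - 2 * k by push_cast; ring,
    signSumCount_sub_two_mul, ← ENNReal.ofReal_natCast, ← ENNReal.ofReal_mul (by positivity)]
  congr 1
  have hexp : ((n + 1 - a + (n + 1 - b) - (n + 1) : ℕ) : ℤ) = (n + 1 : ℕ) - a - b := by omega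
  rw [Nat.cast_mul, Nat.cast_pow, Nat.cast_ofNat, ← zpow_natCast, hexp, ← zpow_natCast (2:ℝ) (n+1),
    div_eq_mul_inv, ← zpow_neg,
    show -(a:ℤ) - b = ((n + 1 : ℕ) - a - b) + -((n + 1 : ℕ) : ℤ) by ring,
    zpow_add₀ two_ne_zero]
  ring

/-- Main theorem: on any dyadic rectangle `Q` of dimensions `2^{-a} × 2^{-b}` with
`|Q| = 2^{-a-b} ≥ 2^{-n-1}`, the level set `{signedSum = n+1-2k}` has measure
`|Q| · 2^{-(n+1)} · C(n+1,k)`, regardless of the choice of signs. -/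
theorem main_level_sets (n a b q1 q2 k : ℕ) (hab : a + b ≤ n + 1)
    (hq1 : q1 < 2^a) (hq2 : q2 < 2^b) (hk : k ≤ n + 1)
    (ε : ℕ → ℕ → ℕ → ℝ) (hε : ∀ j m m', ε j m m' = 1 ∨ ε j m m' = -1) :
    volume {p : ℝ × ℝ | p ∈ (dyadicI a q1) ×ˢ (dyadicI b q2) ∧
        signedSum n ε p = (n : ℝ) + 1 - 2 * k}
      = ENNReal.ofReal ((2:ℝ)^(-(a:ℤ)-(b:ℤ)) * ((n+1).choose k : ℝ) / 2^(n+1)) :=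
  main_level_sets_general n a b q1 q2 k hab hq1 hq2 ε hε
end
end

section
/- There exist n ≥ 0, a dyadic rectangle Q ⊆ [0,1)² with |Q| < 2^{-n-1}, signs ε_R ∈ {-1,1}, and an integer k with 0 ≤ k ≤ n+1, such that the measure of {p ∈ Q : ∑_{|R|=2^{-n}} ε_R h_R(p) = n+1-2k} does not equal |Q|·2^{-(n+1)}·C(n+1,k). -/
open MeasureTheory Finset

noncomputable section

theorem volume_dyadicI (k m : ℕ) : volume (dyadicI k m) = ENNReal.ofReal ((2:ℝ)^(-(k:ℤ))) := by
  rw [dyadicI, Real.volume_Ico]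
  ring_nf

theorem volume_dyadicI_prod_s18 (a b q1 q2 : ℕ) :
    volume (dyadicI a q1 ×ˢ dyadicI b q2) = ENNReal.ofReal ((2:ℝ)^(-(a:ℤ)-(b:ℤ))) := by
  rw [Measure.volume_eq_prod, Measure.prod_prod, volume_dyadicI, volume_dyadicI,
    ← ENNReal.ofReal_mul (by positivity), ← zpow_add₀ two_ne_zero, sub_eq_add_neg]

theorem signedSum_zero (ε : ℕ → ℕ → ℕ → ℝ) (p : ℝ × ℝ) :
    signedSum 0 ε p = ε 0 0 0 * haarR 0 0 0 0 p := by
  simp [signedSum]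

theorem haarR_zero_eq_one_of_mem {p : ℝ × ℝ} (hp : p ∈ dyadicI 1 0 ×ˢ dyadicI 1 0) :
    haarR 0 0 0 0 p = 1 := by
  have left_half : dyadicI 1 0 = Set.Ico (((0:ℕ) : ℝ) * (2:ℝ)^(-((0:ℕ):ℤ)))
      ((((0:ℕ) : ℝ) + 1/2) * (2:ℝ)^(-((0:ℕ):ℤ))) := by
    norm_num [dyadicI]
  rw [left_half] at hp
  rw [haarR, haarI, haarI, if_pos hp.1, if_pos hp.2]
  norm_num

/-- The hypothesis `|Q| ≥ 2^{-n-1}` in the main theorem is tight: for some `n`, some dyadic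
rectangle `Q` of dimensions `2^{-a} × 2^{-b}` with `a + b > n + 1`, some signs and some `k`,
the level-set measure differs from `|Q|·2^{-(n+1)}·C(n+1,k)`. -/
theorem small_rectangle_counterexample :
    ∃ (n a b q1 q2 k : ℕ) (ε : ℕ → ℕ → ℕ → ℝ),
      n + 1 < a + b ∧ q1 < 2^a ∧ q2 < 2^b ∧ k ≤ n + 1 ∧
      (∀ j m m', ε j m m' = 1 ∨ ε j m m' = -1) ∧
      volume {p : ℝ × ℝ | p ∈ (dyadicI a q1) ×ˢ (dyadicI b q2) ∧
          signedSum n ε p = (n : ℝ) + 1 - 2 * k}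
        ≠ ENNReal.ofReal ((2:ℝ)^(-(a:ℤ)-(b:ℤ)) * ((n+1).choose k : ℝ) / 2^(n+1)) := by
  refine ⟨0, 1, 1, 0, 0, 0, fun _ _ _ => 1, by norm_num, by norm_num, by norm_num, by norm_num,
    fun _ _ _ => Or.inl rfl, ?_⟩
  -- On the quarter `Q = [0,1/2)²` the only Haar function of area one is constant, so the
  -- level set is all of `Q` rather than half of it.
  have level_set_eq : {p : ℝ × ℝ | p ∈ dyadicI 1 0 ×ˢ dyadicI 1 0 ∧
      signedSum 0 (fun _ _ _ => 1) p = ((0:ℕ) : ℝ) + 1 - 2 * ((0:ℕ) : ℝ)} =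
      dyadicI 1 0 ×ˢ dyadicI 1 0 :=
    Set.sep_eq_self_iff_mem_true.mpr fun p hp => by
      rw [signedSum_zero, haarR_zero_eq_one_of_mem hp]
      norm_num
  rw [level_set_eq, volume_dyadicI_prod_s18, Ne,
    ENNReal.ofReal_eq_ofReal_iff (by positivity) (by positivity)]
  norm_num
end
end
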